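/- Let T be a locally compact, second countable Hausdorff topological space, let σ be a Radon measure on T, and let λ : T → ℝ be continuous. Let F be the ℓ²-direct sum ℝ ⊕ ⨁_{n≥1} L²(T^n, σ^{⊗n}), with vacuum vector Ω = (1,0,0,…). Suppose x assigns to each continuous compactly supported function f : T → ℝ a bounded linear operator x(f) on F such that x(f)Ω = f (in the first summand) and, for every n ≥ 1 and g ∈ L²(T^n, σ^{⊗n}), x(f) maps the element g of the n-th summand to the sum of the function (t_0,…,t_n) ↦ f(t_0)g(t_1,…,t_n) in the (n+1)-st summand, the function (t_1,…,t_n) ↦ λ(t_1)f(t_1)g(t_1,…,t_n) in the n-th summand, and the function (t_2,…,t_n) ↦ ∫_T f(t)g(t,t_2,…,t_n) dσ(t) in the (n−1)-st summand. Then the vacuum Ω is cyclic for the family (x(f)): the closed linear span of {Ω} ∪ {x(f_1)⋯x(f_n)Ω : f_1,…,f_n continuous with compact support, n ≥ 1} equals F. -/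

import Mathlib

/-!
Let `M` be the closed span. It is invariant under every `x(f)`, and `x(f)` sends `g` in the
`n`-th summand to `f ⊗ g` in the `(n+1)`-st summand plus terms in the summands `n` and `n - 1`.
By induction on `n`, `M` therefore contains every summand: `f ⊗ g ∈ M` for compactly supported
continuous `f`, hence for all `f ∈ L²(σ)` by density, and elementary tensors span a dense subspace
of `L²(T × Tⁿ) ≅ L²(Tⁿ⁺¹)` because a function orthogonal to all of them has zero integral over
every rectangle. Finally the summands span a dense subspace of the `ℓ²`-sum.
-/

open MeasureTheory

/-- The `n`-fold product measure `σ^{⊗n}` on `Tⁿ = (Fin n → T)`. -/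
noncomputable def fockMeas {T : Type*} [MeasurableSpace T] (σ : Measure T) (n : ℕ) :
    Measure (Fin n → T) :=
  Measure.pi fun _ => σ

/-- The `n`-th summand `L²(Tⁿ, σ^{⊗n})` of the full Fock space (for `n = 0` this is
`L²` of the one-point space `T⁰`, canonically `ℝ`). -/
noncomputable abbrev FockComp {T : Type*} [MeasurableSpace T] (σ : Measure T) (n : ℕ) :
    Type _ :=
  Lp ℝ 2 (fockMeas σ n)

/-- The full Fock space over `L²(T, σ)`, realized as the `ℓ²`-direct sum
`ℝ ⊕ ⨁_{n≥1} L²(Tⁿ, σ^{⊗n})`. -/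
noncomputable abbrev Fock {T : Type*} [MeasurableSpace T] (σ : Measure T) : Type _ :=
  lp (fun n : ℕ => FockComp σ n) 2

/-- The vacuum vector `Ω = (1, 0, 0, …)` of the full Fock space. -/
noncomputable def fockVacuum {T : Type*} [MeasurableSpace T] (σ : Measure T) : Fock σ :=
  lp.single 2 0 (indicatorConstLp 2 MeasurableSet.univ
    (by simp [fockMeas, Measure.pi_empty_univ]) (1 : ℝ))

/-- The defining componentwise action of the free Gauss–Poisson field operator
`x(f) = a⁺(f) + a⁻(f) + a⁰(λf)` on the full Fock space: `x(f)Ω = f`, and on the `n`-th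
summand (`n ≥ 1`) it acts by the sum of creation `(t₀,…,tₙ) ↦ f(t₀)g(t₁,…,tₙ)`, the
neutral part `(t₁,…,tₙ) ↦ λ(t₁)f(t₁)g(t₁,…,tₙ)` and annihilation
`(t₂,…,tₙ) ↦ ∫ f(t)g(t,t₂,…,tₙ) dσ(t)`. -/
def IsGPField {T : Type*} [MeasurableSpace T] (σ : Measure T) (lam : T → ℝ) (f : T → ℝ)
    (A : Fock σ →L[ℝ] Fock σ) : Prop :=
  (∃ f1 : FockComp σ 1, (⇑f1 =ᵐ[fockMeas σ 1] fun x => f (x 0)) ∧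
      A (fockVacuum σ) = lp.single 2 1 f1) ∧
  ∀ (m : ℕ) (g : FockComp σ (m + 1)),
    ∃ (gp : FockComp σ (m + 2)) (g0 : FockComp σ (m + 1)) (ga : FockComp σ m),
      (⇑gp =ᵐ[fockMeas σ (m + 2)] fun x => f (x 0) * g (fun j => x j.succ)) ∧
      (⇑g0 =ᵐ[fockMeas σ (m + 1)] fun x => lam (x 0) * f (x 0) * g x) ∧
      (⇑ga =ᵐ[fockMeas σ m] fun y => ∫ t, f t * g (Fin.cons t y) ∂σ) ∧
      A (lp.single 2 (m + 1) g) =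
        lp.single 2 (m + 2) gp + lp.single 2 (m + 1) g0 + lp.single 2 m ga

open Set Filter
open scoped ENNReal

namespace MeasureTheory

section ProdIntegral

variable {α β E : Type*} [MeasurableSpace α] [MeasurableSpace β]
  [NormedAddCommGroup E] [NormedSpace ℝ E] [CompleteSpace E]

theorem Integrable.ae_eq_zero_of_forall_setIntegral_prod_eq_zero {ρ : Measure (α × β)}
    {f : α × β → E} (hf : Integrable f ρ)
    (h : ∀ s, MeasurableSet s → ∀ t, MeasurableSet t → ∫ x in s ×ˢ t, f x ∂ρ = 0) :
    f =ᵐ[ρ] 0 := by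
  suffices ∀ u, MeasurableSet u → ∫ x in u, f x ∂ρ = 0 from
    hf.ae_eq_zero_of_forall_setIntegral_eq_zero fun u hu _ => this u hu
  intro u hu
  induction u, hu using MeasurableSpace.induction_on_inter generateFrom_prod.symm
    isPiSystem_prod with
  | empty => simp
  | basic u hu =>
    obtain ⟨s, hs, t, ht, rfl⟩ := hu
    exact h s hs t ht
  | compl u hu ihu =>
    have huniv : ∫ x, f x ∂ρ = 0 := by
      simpa [Set.univ_prod_univ] using h univ .univ univ .univ
    simpa [ihu, huniv] using integral_add_compl hu hf
  | iUnion g hgd hgm ihg => simp [integral_iUnion hgm hgd hf.integrableOn, ihg]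

end ProdIntegral

section Tensor

variable {α β : Type*} [MeasurableSpace α] [MeasurableSpace β] {μ : Measure α} {ν : Measure β}

theorem eLpNorm_mul_prod [SFinite ν] {p : ℝ≥0∞} (hp0 : p ≠ 0) (hp : p ≠ ∞) {F : α → ℝ}
    {G : β → ℝ} (hF : AEStronglyMeasurable F μ) (hG : AEStronglyMeasurable G ν) :
    eLpNorm (fun x : α × β => F x.1 * G x.2) p (μ.prod ν) = eLpNorm F p μ * eLpNorm G p ν := by
  simp only [eLpNorm_eq_lintegral_rpow_enorm_toReal hp0 hp, enorm_mul,
    ENNReal.mul_rpow_of_nonneg _ _ ENNReal.toReal_nonneg]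
  rw [lintegral_prod_mul (hF.enorm.pow_const _) (hG.enorm.pow_const _),
    ENNReal.mul_rpow_of_nonneg _ _ (by positivity)]

theorem AEStronglyMeasurable.mul_prod [SFinite ν] {F : α → ℝ} {G : β → ℝ}
    (hF : AEStronglyMeasurable F μ) (hG : AEStronglyMeasurable G ν) :
    AEStronglyMeasurable (fun x : α × β => F x.1 * G x.2) (μ.prod ν) :=
  (hF.comp_quasiMeasurePreserving Measure.quasiMeasurePreserving_fst).mul
    (hG.comp_quasiMeasurePreserving Measure.quasiMeasurePreserving_snd)

theorem MemLp.mul_prod [SFinite ν] {p : ℝ≥0∞} (hp0 : p ≠ 0) (hp : p ≠ ∞) {F : α → ℝ}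
    {G : β → ℝ} (hF : MemLp F p μ) (hG : MemLp G p ν) :
    MemLp (fun x : α × β => F x.1 * G x.2) p (μ.prod ν) :=
  ⟨hF.1.mul_prod hG.1, by
    rw [eLpNorm_mul_prod hp0 hp hF.1 hG.1]; exact ENNReal.mul_lt_top hF.2 hG.2⟩

theorem _root_.Filter.EventuallyEq.mul_prod [SFinite ν] {F F' : α → ℝ} {G G' : β → ℝ}
    (hF : F =ᵐ[μ] F') (hG : G =ᵐ[ν] G') :
    (fun x : α × β => F x.1 * G x.2) =ᵐ[μ.prod ν] fun x => F' x.1 * G' x.2 :=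
  (Measure.quasiMeasurePreserving_fst.ae_eq_comp hF).mul
    (Measure.quasiMeasurePreserving_snd.ae_eq_comp hG)

namespace L2

variable [SFinite ν]

noncomputable def tensorRightFun (g : Lp ℝ 2 ν) (f : Lp ℝ 2 μ) : Lp ℝ 2 (μ.prod ν) :=
  ((Lp.memLp f).mul_prod two_ne_zero ENNReal.ofNat_ne_top (Lp.memLp g)).toLp _

theorem coeFn_tensorRightFun (g : Lp ℝ 2 ν) (f : Lp ℝ 2 μ) :
    tensorRightFun g f =ᵐ[μ.prod ν] fun x => f x.1 * g x.2 :=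
  MemLp.coeFn_toLp _

theorem norm_tensorRightFun (g : Lp ℝ 2 ν) (f : Lp ℝ 2 μ) :
    ‖tensorRightFun g f‖ = ‖f‖ * ‖g‖ := by
  rw [Lp.norm_def, eLpNorm_congr_ae (coeFn_tensorRightFun g f),
    eLpNorm_mul_prod two_ne_zero ENNReal.ofNat_ne_top (Lp.aestronglyMeasurable f)
      (Lp.aestronglyMeasurable g), ENNReal.toReal_mul, Lp.norm_def, Lp.norm_def]

noncomputable def tensorRight (g : Lp ℝ 2 ν) : Lp ℝ 2 μ →L[ℝ] Lp ℝ 2 (μ.prod ν) :=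
  LinearMap.mkContinuous
    { toFun := tensorRightFun g
      map_add' := fun f f' => by
        refine Lp.ext ((coeFn_tensorRightFun g _).trans ?_)
        refine ((Lp.coeFn_add f f').mul_prod EventuallyEq.rfl).trans ?_
        filter_upwards [Lp.coeFn_add (tensorRightFun g f) (tensorRightFun g f'),
          coeFn_tensorRightFun g f, coeFn_tensorRightFun g f'] with x h h₁ h₂
        show _ = ⇑(tensorRightFun g f + tensorRightFun g f') x
        simp only [h, Pi.add_apply, h₁, h₂, add_mul]
      map_smul' := fun c f => by
        refine Lp.ext ((coeFn_tensorRightFun g _).trans ?_)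
        refine ((Lp.coeFn_smul c f).mul_prod EventuallyEq.rfl).trans ?_
        filter_upwards [Lp.coeFn_smul c (tensorRightFun g f), coeFn_tensorRightFun g f]
          with x h h₁
        show _ = ⇑(c • tensorRightFun g f) x
        simp only [h, Pi.smul_apply, h₁, smul_eq_mul, mul_assoc] }
    ‖g‖ fun f => by simp [norm_tensorRightFun, mul_comm]

theorem coeFn_tensorRight (g : Lp ℝ 2 ν) (f : Lp ℝ 2 μ) :
    tensorRight g f =ᵐ[μ.prod ν] fun x => f x.1 * g x.2 :=
  coeFn_tensorRightFun g f

theorem tensorRight_indicatorConstLp_one {s : Set α} {t : Set β} (hs : MeasurableSet s)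
    (hμs : μ s ≠ ∞) (ht : MeasurableSet t) (hνt : ν t ≠ ∞) :
    tensorRight (indicatorConstLp 2 ht hνt (1 : ℝ)) (indicatorConstLp 2 hs hμs 1) =
      indicatorConstLp 2 (hs.prod ht)
        (by rw [Measure.prod_prod]; exact ENNReal.mul_ne_top hμs hνt) 1 := by
  refine Lp.ext ((coeFn_tensorRight _ _).trans ?_)
  refine (indicatorConstLp_coeFn.mul_prod indicatorConstLp_coeFn).trans ?_
  have hprod : (fun x : α × β => s.indicator (fun _ => (1 : ℝ)) x.1 *
      t.indicator (fun _ => 1) x.2) = (s ×ˢ t).indicator fun _ => 1 :=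
    funext fun x => (Set.indicator_prod_one (i := x.1) (j := x.2)).symm
  rw [hprod]
  exact indicatorConstLp_coeFn.symm

theorem eq_top_of_forall_tensorRight_mem [SigmaFinite μ] [SigmaFinite ν]
    {N : Submodule ℝ (Lp ℝ 2 (μ.prod ν))} (hN : IsClosed (N : Set (Lp ℝ 2 (μ.prod ν))))
    (h : ∀ f g, tensorRight g f ∈ N) : N = ⊤ := by
  rw [← hN.submodule_topologicalClosure_eq, Submodule.topologicalClosure_eq_top_iff,
    Submodule.eq_bot_iff]
  intro u hu
  have hrect : ∀ s, MeasurableSet s → μ s < ∞ → ∀ t, MeasurableSet t → ν t < ∞ →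
      ∫ x in s ×ˢ t, u x ∂(μ.prod ν) = 0 := by
    intro s hs hμs t ht hνt
    have := Submodule.inner_right_of_mem_orthogonal
      (h (indicatorConstLp 2 hs hμs.ne 1) (indicatorConstLp 2 ht hνt.ne 1)) hu
    rwa [tensorRight_indicatorConstLp_one, inner_indicatorConstLp_one] at this
  have hloc : ∀ k, u =ᵐ[(μ.prod ν).restrict (spanningSets μ k ×ˢ spanningSets ν k)] 0 := by
    intro k
    have hfin : (μ.prod ν) (spanningSets μ k ×ˢ spanningSets ν k) < ∞ := by
      rw [Measure.prod_prod]
      exact ENNReal.mul_lt_top (measure_spanningSets_lt_top μ k) (measure_spanningSets_lt_top ν k)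
    have : IsFiniteMeasure ((μ.prod ν).restrict (spanningSets μ k ×ˢ spanningSets ν k)) :=
      ⟨by rwa [Measure.restrict_apply_univ]⟩
    refine Integrable.ae_eq_zero_of_forall_setIntegral_prod_eq_zero
      (((Lp.memLp u).restrict _).integrable one_le_two) fun s hs t ht => ?_
    rw [Measure.restrict_restrict (hs.prod ht), prod_inter_prod]
    exact hrect _ (hs.inter (measurableSet_spanningSets μ k))
      ((measure_mono inter_subset_right).trans_lt (measure_spanningSets_lt_top μ k))
      _ (ht.inter (measurableSet_spanningSets ν k))
      ((measure_mono inter_subset_right).trans_lt (measure_spanningSets_lt_top ν k))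
  have hcover : ⋃ k, spanningSets μ k ×ˢ spanningSets ν k = univ := by
    rw [iUnion_prod_of_monotone (monotone_spanningSets μ) (monotone_spanningSets ν),
      iUnion_spanningSets, iUnion_spanningSets, univ_prod_univ]
  have hae : u =ᵐ[μ.prod ν] 0 := by
    have := (ae_restrict_iUnion_iff _ _).mpr hloc
    rwa [hcover, Measure.restrict_univ] at this
  exact Lp.ext (hae.trans (Lp.coeFn_zero ℝ 2 _).symm)

end L2

end Tensor

theorem Lp.dense_setOf_continuous_hasCompactSupport {α E : Type*} [TopologicalSpace α]
    [NormalSpace α] [R1Space α] [WeaklyLocallyCompactSpace α] [MeasurableSpace α] [BorelSpace α]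
    [NormedAddCommGroup E] [NormedSpace ℝ E] {μ : Measure α} [μ.Regular] {p : ℝ≥0∞}
    [Fact (1 ≤ p)] (hp : p ≠ ∞) :
    Dense {F : Lp E p μ | ∃ g : α → E, Continuous g ∧ HasCompactSupport g ∧ F =ᵐ[μ] g} := by
  intro F
  rw [EMetric.mem_closure_iff]
  intro ε hε
  obtain ⟨δ, hδ, hδε⟩ := exists_between hε
  obtain ⟨g, hg_supp, hFg, hg_cont, hg⟩ :=
    (Lp.memLp F).exists_hasCompactSupport_eLpNorm_sub_le hp hδ.ne'
  refine ⟨hg.toLp g, ⟨g, hg_cont, hg_supp, hg.coeFn_toLp⟩, ?_⟩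
  rw [Lp.edist_def, eLpNorm_congr_ae (EventuallyEq.rfl.sub hg.coeFn_toLp)]
  exact hFg.trans_lt hδε

end MeasureTheory

theorem lp.eq_top_of_forall_single_mem {ι 𝕜 : Type*} {E : ι → Type*} [DecidableEq ι]
    [NormedRing 𝕜] [∀ i, NormedAddCommGroup (E i)] [∀ i, Module 𝕜 (E i)]
    [∀ i, IsBoundedSMul 𝕜 (E i)] {p : ℝ≥0∞} [Fact (1 ≤ p)] (hp : p ≠ ∞)
    {M : Submodule 𝕜 (lp E p)} (hM : IsClosed (M : Set (lp E p)))
    (h : ∀ i (a : E i), lp.single p i a ∈ M) : M = ⊤ :=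
  Submodule.eq_top_iff'.mpr fun v => hM.mem_of_tendsto (lp.hasSum_single hp v)
    (Eventually.of_forall fun _ => Submodule.sum_mem M fun i _ => h i (v i))

theorem Submodule.mapsTo_topologicalClosure_span {R E : Type*} [Semiring R]
    [AddCommMonoid E] [TopologicalSpace E] [Module R E] [ContinuousAdd E]
    [ContinuousConstSMul R E] {S : Set E} {A : E →L[R] E} (hA : MapsTo A S S) :
    MapsTo A (span R S).topologicalClosure (span R S).topologicalClosure := by
  have hspan : span R S ≤ (span R S).comap (A : E →ₗ[R] E) :=
    span_le.mpr fun v hv => subset_span (hA hv)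
  exact MapsTo.closure (fun v hv => hspan hv) A.continuous

theorem mapsTo_singleton_union_listProd_ofFn_apply {ι R E : Type*} [Semiring R] [AddCommMonoid E]
    [TopologicalSpace E] [Module R E] (x : ι → E →L[R] E) (P : ι → Prop) (Ω : E) {f : ι}
    (hf : P f) :
    MapsTo (x f) ({Ω} ∪ {v | ∃ (n : ℕ) (fs : Fin (n + 1) → ι), (∀ i, P (fs i)) ∧
        v = (List.ofFn fun i => x (fs i)).prod Ω})
      ({Ω} ∪ {v | ∃ (n : ℕ) (fs : Fin (n + 1) → ι), (∀ i, P (fs i)) ∧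
        v = (List.ofFn fun i => x (fs i)).prod Ω}) := by
  rintro v (rfl | ⟨n, fs, hfs, rfl⟩)
  · exact Or.inr ⟨0, fun _ => f, fun _ => hf, by simp⟩
  · refine Or.inr ⟨n + 1, Fin.cons f fs, Fin.cases hf hfs, ?_⟩
    simp [List.ofFn_succ]

section Fock

variable {T : Type*} [MeasurableSpace T] {σ : Measure T}

theorem single_zero_eq_smul_fockVacuum (g : FockComp σ 0) :
    (lp.single 2 0 g : Fock σ) = g (fun i => i.elim0) • fockVacuum σ := by
  rw [fockVacuum, ← lp.single_smul]
  congr 1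
  refine Lp.ext ?_
  filter_upwards [Lp.coeFn_smul (g (fun i => i.elim0)) (indicatorConstLp 2 MeasurableSet.univ
      (by simp [fockMeas, Measure.pi_empty_univ]) (1 : ℝ)),
    indicatorConstLp_coeFn (p := 2) (μ := fockMeas σ 0) (c := (1 : ℝ))] with y h₁ h₂
  rw [h₁, Pi.smul_apply, h₂, indicator_of_mem (mem_univ y), smul_eq_mul, mul_one]
  exact congrArg g (Subsingleton.elim _ _)

variable [SigmaFinite σ]

instance (n : ℕ) : SigmaFinite (fockMeas σ n) := by
  unfold fockMeas; infer_instance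

theorem measurePreserving_piFinSuccAbove_fockMeas (n : ℕ) :
    MeasurePreserving (MeasurableEquiv.piFinSuccAbove (fun _ => T) 0) (fockMeas σ (n + 1))
      (σ.prod (fockMeas σ n)) :=
  measurePreserving_piFinSuccAbove (fun _ => σ) 0

noncomputable def fockTensorRight {n : ℕ} (g : FockComp σ n) :
    Lp ℝ 2 σ →L[ℝ] FockComp σ (n + 1) :=
  (Lp.compMeasurePreservingₗᵢ ℝ _
    (measurePreserving_piFinSuccAbove_fockMeas n)).toContinuousLinearMap ∘L L2.tensorRight g

theorem coeFn_fockTensorRight_toLp {n : ℕ} {f : T → ℝ} (hf : MemLp f 2 σ) (g : FockComp σ n) :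
    fockTensorRight g (hf.toLp f) =ᵐ[fockMeas σ (n + 1)]
      fun x => f (x 0) * g (fun j => x j.succ) := by
  have hprod := (L2.coeFn_tensorRight g (hf.toLp f)).trans (hf.coeFn_toLp.mul_prod .rfl)
  refine (Lp.coeFn_compMeasurePreserving _ _).trans ?_
  exact ((measurePreserving_piFinSuccAbove_fockMeas n).quasiMeasurePreserving.ae_eq_comp
    hprod).trans (.of_forall fun _ => rfl)

theorem FockComp.eq_top_of_forall_fockTensorRight_mem {n : ℕ}
    {N : Submodule ℝ (FockComp σ (n + 1))} (hN : IsClosed (N : Set (FockComp σ (n + 1))))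
    (h : ∀ f (g : FockComp σ n), fockTensorRight g f ∈ N) : N = ⊤ := by
  set e := MeasurableEquiv.piFinSuccAbove (fun _ : Fin (n + 1) => T) 0
  have he := measurePreserving_piFinSuccAbove_fockMeas (σ := σ) n
  set Φ : Lp ℝ 2 (σ.prod (fockMeas σ n)) →L[ℝ] FockComp σ (n + 1) :=
    (Lp.compMeasurePreservingₗᵢ ℝ e he).toContinuousLinearMap
  have hall : N.comap Φ.toLinearMap = ⊤ :=
    L2.eq_top_of_forall_tensorRight_mem (N := N.comap Φ.toLinearMap) (hN.preimage Φ.continuous) h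
  rw [Submodule.eq_top_iff']
  intro u
  have hu : Φ (Lp.compMeasurePreserving e.symm he.symm u) = u := by
    refine Lp.ext ((Lp.coeFn_compMeasurePreserving _ _).trans ?_)
    refine (he.quasiMeasurePreserving.ae_eq_comp
      (Lp.coeFn_compMeasurePreserving u he.symm)).trans (Eventually.of_forall fun x => ?_)
    simp only [Function.comp_apply, MeasurableEquiv.symm_apply_apply]
  rw [← hu]
  exact (Submodule.eq_top_iff'.mp hall) _

variable {lam f : T → ℝ} {A : Fock σ →L[ℝ] Fock σ}

theorem IsGPField.single_one_fockTensorRight (hA : IsGPField σ lam f A) (hf : MemLp f 2 σ)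
    (g : FockComp σ 0) :
    (lp.single 2 1 (fockTensorRight g (hf.toLp f)) : Fock σ) =
      g (fun i => i.elim0) • A (fockVacuum σ) := by
  obtain ⟨f₁, hf₁, hAΩ⟩ := hA.1
  rw [hAΩ, ← lp.single_smul]
  congr 1
  refine Lp.ext ?_
  filter_upwards [coeFn_fockTensorRight_toLp hf g, Lp.coeFn_smul (g (fun i => i.elim0)) f₁, hf₁]
    with x h₁ h₂ h₃
  rw [h₁, h₂, Pi.smul_apply, h₃, smul_eq_mul, mul_comm]
  exact congrArg (fun y => g y * f (x 0)) (Subsingleton.elim _ _)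

theorem IsGPField.exists_single_fockTensorRight_eq (hA : IsGPField σ lam f A)
    (hf : MemLp f 2 σ) {m : ℕ} (g : FockComp σ (m + 1)) :
    ∃ (g₀ : FockComp σ (m + 1)) (gₐ : FockComp σ m),
      (lp.single 2 (m + 2) (fockTensorRight g (hf.toLp f)) : Fock σ) =
        A (lp.single 2 (m + 1) g) - lp.single 2 (m + 1) g₀ - lp.single 2 m gₐ := by
  obtain ⟨gp, g₀, gₐ, hgp, -, -, hAg⟩ := hA.2 m g
  refine ⟨g₀, gₐ, ?_⟩
  rw [hAg, Lp.ext ((coeFn_fockTensorRight_toLp hf g).trans hgp.symm)]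
  abel

theorem IsGPField.single_fockTensorRight_mem (hA : IsGPField σ lam f A) (hf : MemLp f 2 σ)
    {M : Submodule ℝ (Fock σ)} (hΩ : fockVacuum σ ∈ M) (hAM : MapsTo A M M) {m : ℕ}
    (hm : ∀ j ≤ m, ∀ g : FockComp σ j, (lp.single 2 j g : Fock σ) ∈ M) (g : FockComp σ m) :
    (lp.single 2 (m + 1) (fockTensorRight g (hf.toLp f)) : Fock σ) ∈ M := by
  cases m with
  | zero =>
    rw [hA.single_one_fockTensorRight hf g]
    exact M.smul_mem _ (hAM hΩ)
  | succ m =>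
    obtain ⟨g₀, gₐ, h⟩ := hA.exists_single_fockTensorRight_eq hf g
    rw [h]
    exact M.sub_mem (M.sub_mem (hAM (hm _ le_rfl g)) (hm _ le_rfl g₀)) (hm _ m.le_succ gₐ)

end Fock

theorem single_mem_of_isGPField {T : Type*} [TopologicalSpace T] [NormalSpace T] [R1Space T]
    [WeaklyLocallyCompactSpace T] [MeasurableSpace T] [BorelSpace T] {σ : Measure T}
    [σ.Regular] [SigmaFinite σ] {lam : T → ℝ} {x : (T → ℝ) → (Fock σ →L[ℝ] Fock σ)}
    (hx : ∀ f : T → ℝ, Continuous f → HasCompactSupport f → IsGPField σ lam f (x f))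
    {M : Submodule ℝ (Fock σ)} (hM : IsClosed (M : Set (Fock σ))) (hΩ : fockVacuum σ ∈ M)
    (hxM : ∀ f : T → ℝ, Continuous f → HasCompactSupport f → MapsTo (x f) M M)
    (k : ℕ) (g : FockComp σ k) : (lp.single 2 k g : Fock σ) ∈ M := by
  induction k using Nat.strong_induction_on with
  | _ k ih =>
  cases k with
  | zero =>
    rw [single_zero_eq_smul_fockVacuum]
    exact M.smul_mem _ hΩ
  | succ m =>
    let ι := lp.singleContinuousLinearMap ℝ (fun n => FockComp σ n) 2 (m + 1)
    suffices M.comap ι.toLinearMap = ⊤ from Submodule.eq_top_iff'.mp this g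
    refine FockComp.eq_top_of_forall_fockTensorRight_mem (hM.preimage ι.continuous) fun F g' => ?_
    let P := (M.comap ι.toLinearMap).comap (fockTensorRight g').toLinearMap
    have hP : IsClosed (P : Set (Lp ℝ 2 σ)) :=
      (hM.preimage ι.continuous).preimage (fockTensorRight g').continuous
    refine closure_minimal ?_ hP (Lp.dense_setOf_continuous_hasCompactSupport (E := ℝ)
      ENNReal.ofNat_ne_top F)
    rintro F' ⟨φ, hφc, hφs, hF'φ⟩
    have hφ : MemLp φ 2 σ := hφc.memLp_of_hasCompactSupport hφs
    rw [← Lp.toLp_coeFn F' (Lp.memLp F'), MemLp.toLp_congr _ hφ hF'φ]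
    exact (hx φ hφc hφs).single_fockTensorRight_mem hφ hΩ (hxM φ hφc hφs)
      (fun j hj => ih j (Nat.lt_succ_of_le hj)) g'

theorem stmt11_general
    {T : Type*} [TopologicalSpace T] [LocallyCompactSpace T]
    [SecondCountableTopology T] [T2Space T]
    [MeasurableSpace T] [BorelSpace T]
    (σ : Measure T) [σ.Regular]
    (lam : T → ℝ)
    (x : (T → ℝ) → (Fock σ →L[ℝ] Fock σ))
    (hx : ∀ f : T → ℝ, Continuous f → HasCompactSupport f → IsGPField σ lam f (x f)) :
    (Submodule.span ℝ
      ({fockVacuum σ} ∪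
        {v : Fock σ | ∃ (n : ℕ) (fs : Fin (n + 1) → T → ℝ),
          (∀ i, Continuous (fs i) ∧ HasCompactSupport (fs i)) ∧
          v = ((List.ofFn fun i => x (fs i)).prod) (fockVacuum σ)})).topologicalClosure
      = ⊤ := by
  refine lp.eq_top_of_forall_single_mem ENNReal.ofNat_ne_top
    (Submodule.isClosed_topologicalClosure _) (single_mem_of_isGPField hx
      (Submodule.isClosed_topologicalClosure _) ?_ fun f hfc hfs => ?_)
  · exact Submodule.le_topologicalClosure _ (Submodule.subset_span (Or.inl rfl))
  · exact Submodule.mapsTo_topologicalClosure_span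
      (mapsTo_singleton_union_listProd_ofFn_apply x
        (fun f => Continuous f ∧ HasCompactSupport f) _ ⟨hfc, hfs⟩)

/-- **Cyclicity of the vacuum for the free Gauss–Poisson field.** If each `x(f)`
(`f` continuous with compact support) has the prescribed creation/neutral/annihilation
action, then the closed linear span of `Ω` together with all vectors
`x(f₁)⋯x(fₙ)Ω` is the whole Fock space. -/
theorem stmt11
    {T : Type*} [TopologicalSpace T] [LocallyCompactSpace T]
    [SecondCountableTopology T] [T2Space T]
    [MeasurableSpace T] [BorelSpace T]
    (σ : Measure T) [σ.Regular]
    (lam : T → ℝ) (hlam : Continuous lam)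
    (x : (T → ℝ) → (Fock σ →L[ℝ] Fock σ))
    (hx : ∀ f : T → ℝ, Continuous f → HasCompactSupport f → IsGPField σ lam f (x f)) :
    (Submodule.span ℝ
      ({fockVacuum σ} ∪
        {v : Fock σ | ∃ (n : ℕ) (fs : Fin (n + 1) → T → ℝ),
          (∀ i, Continuous (fs i) ∧ HasCompactSupport (fs i)) ∧
          v = ((List.ofFn fun i => x (fs i)).prod) (fockVacuum σ)})).topologicalClosure
      = ⊤ :=
  stmt11_general σ lam x hx
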